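/- (The (1+λ)-EA with c < 1 is fast on all monotone functions.) Fix constants δ ∈ (0,1), c ∈ (0, 1−δ], and λ ∈ ℕ. The (1+λ)-EA with mutation parameter c maintains a single search point x ∈ {0,1}^n, initialized uniformly at random; in each generation it creates λ offspring, each obtained independently from x by flipping every bit independently with probability c/n; letting y be a fittest offspring (ties broken uniformly at random), it replaces x by y if and only if f(y) ≥ f(x). Then there exists a constant C > 0 such that, for every sequence (f_n) of strictly monotone functions f_n : {0,1}^n → ℝ, the probability that the (1+λ)-EA run on f_n reaches the all-ones string within C·n·ln n generations tends to 1 as n → ∞. -/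

import Mathlib

/-!
The number of zeros `Z` of the current search point decreases by a factor `1 - δ²c/n` in
expectation per generation. An offspring that is selected and accepted either equals the parent
or turns some zero into a one. Conditioned on this event, each one of the parent is lost with
probability at most `c/n`: raising that bit again keeps the offspring the unique fittest one and
accepted, which gives a coupling. So such a step changes `Z` by at most `c - 1 ≤ -δ` in
expectation. It happens with probability at least `δ (c/n) Z`, for instance when the first
offspring flips exactly one zero. Multiplicative drift then gives
`P(Z_t ≠ 0) ≤ n (1 - δ²c/n)^t ≤ 1/n` for `t = ⌈2/(δ²c) · n log n⌉`.
-/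

open MeasureTheory ProbabilityTheory Filter Topology
open scoped ENNReal

attribute [local instance] Classical.propDecidable

/-- `f : {0,1}^n → ℝ` is strictly monotone. -/
def StrictMonoBool {n : ℕ} (f : (Fin n → Bool) → ℝ) : Prop :=
  ∀ x y : Fin n → Bool, x ≠ y → (∀ i, y i ≤ x i) → f y < f x

/-- Standard bit mutation with rate `c/n`: probability that mutating `x`
produces `y` (each bit flipped independently with probability `c/n`). -/
noncomputable def mutP (c : ℝ) (n : ℕ) (x y : Fin n → Bool) : ℝ≥0∞ :=
  ENNReal.ofReal (∏ i, if y i = x i then 1 - c / n else c / n)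

/-- One-generation transition probability of the (1+λ)-EA on `f` from `x` to
`z`: create `lam` independent standard-bit-mutation offspring, pick a fittest
one uniformly at random among the ties, and accept it iff its `f`-value is at
least `f x`. -/
noncomputable def stepP (n lam : ℕ) (c : ℝ) (f : (Fin n → Bool) → ℝ)
    (x z : Fin n → Bool) : ℝ≥0∞ :=
  ∑ ys : Fin lam → (Fin n → Bool),
    (∏ j, mutP c n x (ys j)) *
      (((Finset.univ.filter fun j : Fin lam =>
            (∀ k, f (ys k) ≤ f (ys j)) ∧ (if f x ≤ f (ys j) then ys j else x) = z).card
          : ℝ≥0∞)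
        / ((Finset.univ.filter fun j : Fin lam => ∀ k, f (ys k) ≤ f (ys j)).card : ℝ≥0∞))

theorem sum_filter_le_mul_sum_of_equiv {ι : Type*} [Fintype ι] (G : ι → ℝ) (P : ι → Prop)
    [DecidablePred P] (e : ι ≃ ι) (he : ∀ a, P (e a) ↔ ¬P a) {p : ℝ}
    (hG : ∀ a, P a → G a * (1 - p) ≤ G (e a) * p) :
    ∑ a with P a, G a ≤ p * ∑ a, G a := by
  have hswap : ∑ a with P a, G (e a) = ∑ a with ¬P a, G a :=
    Finset.sum_equiv e (fun a => by simp [he]) (fun _ _ => rfl)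
  have hle : ∑ a with P a, G a * (1 - p) ≤ ∑ a with P a, G (e a) * p :=
    Finset.sum_le_sum fun a ha => hG a (Finset.mem_filter.1 ha).2
  rw [← Finset.sum_mul, ← Finset.sum_mul, hswap] at hle
  rw [← Finset.sum_filter_add_sum_filter_not Finset.univ P G]
  linarith

theorem prod_apply_update {ι : Type*} [Fintype ι] [DecidableEq ι] {α : ι → Type*} {M : Type*}
    [CommMonoid M] (F : ∀ i, α i → M) (g : ∀ i, α i) (j : ι) (a : α j) :
    ∏ i, F i (Function.update g j a i) = F j a * ∏ i ∈ {j}ᶜ, F i (g i) := by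
  simp_rw [Function.apply_update F g j a]
  rw [Finset.prod_update_of_mem (Finset.mem_univ j), Finset.compl_eq_univ_sdiff]

theorem sum_prod_eq_one {ι κ R : Type*} [Fintype ι] [DecidableEq ι] [Fintype κ] [CommSemiring R]
    (q : ι → κ → R) (hq : ∀ i, ∑ b, q i b = 1) :
    ∑ y : ι → κ, ∏ i, q i (y i) = 1 := by
  rw [← Fintype.prod_sum]
  simp [hq]

theorem sum_prod_mul_apply {ι κ R : Type*} [Fintype ι] [DecidableEq ι] [Fintype κ]
    [CommSemiring R] (q : ι → κ → R) (hq : ∀ i, ∑ b, q i b = 1) (j : ι) (φ : κ → R) :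
    ∑ y : ι → κ, (∏ i, q i (y i)) * φ (y j) = ∑ b, q j b * φ b := by
  have key := Fintype.prod_sum fun i b => q i b * if i = j then φ b else 1
  simp only [Finset.prod_mul_distrib, Finset.prod_ite_eq', Finset.mem_univ, if_true] at key
  rw [← key, Fintype.prod_eq_mul_prod_compl j]
  simp +contextual [hq]

theorem one_sub_div_pow_ceil_mul_le {n : ℕ} {γ : ℝ} (hγ0 : 0 < γ) (hγ1 : γ ≤ 1) (hn : 1 ≤ n) :
    (1 - γ / n) ^ ⌈2 / γ * n * Real.log n⌉₊ * n ≤ (n : ℝ)⁻¹ := by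
  have hn' : (1 : ℝ) ≤ n := by exact_mod_cast hn
  have hn0 : (0 : ℝ) < n := by linarith
  set N := ⌈2 / γ * n * Real.log n⌉₊
  have hN : 2 * Real.log n ≤ γ / n * N := by
    calc 2 * Real.log n = γ / n * (2 / γ * n * Real.log n) := by field_simp
      _ ≤ γ / n * N := by gcongr; exact Nat.le_ceil _
  calc (1 - γ / n) ^ N * n ≤ Real.exp (-(γ / n)) ^ N * n := by
        gcongr
        · linarith [div_le_self hγ0.le hn']
        · linarith [Real.add_one_le_exp (-(γ / n))]
    _ = Real.exp (-(γ / n * N)) * n := by rw [← Real.exp_nat_mul]; ring_nf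
    _ ≤ Real.exp (-(2 * Real.log n)) * n := by gcongr
    _ = (n : ℝ)⁻¹ := by
        rw [show -(2 * Real.log n) = -Real.log n + -Real.log n by ring, Real.exp_add,
          Real.exp_neg, Real.exp_log hn0]
        field_simp

section MarkovDrift

variable {Ω S : Type*} {X : ℕ → Ω → S}

def pathSet (X : ℕ → Ω → S) (t : ℕ) (h : ℕ → S) : Set Ω := {ω | ∀ u ≤ t, X u ω = h u}

def extendPath {t : ℕ} (g : Fin t → S) (x : S) (u : ℕ) : S :=
  if hu : u < t then g ⟨u, hu⟩ else x

theorem pathSet_succ (t : ℕ) (h : ℕ → S) :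
    pathSet X (t + 1) h = pathSet X t h ∩ {ω | X (t + 1) ω = h (t + 1)} := by
  ext ω
  simp only [pathSet, Set.mem_ofPred_eq, Set.mem_inter_iff, Nat.le_succ_iff_eq_or_le]
  constructor
  · intro hω
    exact ⟨fun u hu => hω u (Or.inr hu), hω _ (Or.inl rfl)⟩
  · rintro ⟨hω, hlast⟩ u (rfl | hu)
    exacts [hlast, hω u hu]

theorem pathSet_congr {t : ℕ} {h h' : ℕ → S} (hh : ∀ u ≤ t, h u = h' u) :
    pathSet X t h = pathSet X t h' := by
  ext ω
  simp only [pathSet, Set.mem_ofPred_eq]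
  exact forall₂_congr fun u hu => by rw [hh u hu]

variable [MeasurableSpace Ω] {μ : Measure Ω}

def HasTransitions (μ : Measure Ω) (X : ℕ → Ω → S) (P : S → S → ℝ≥0∞) : Prop :=
  ∀ (t : ℕ) (h : ℕ → S), μ (pathSet X t h) ≠ 0 →
    ∀ z, μ[|pathSet X t h] {ω | X (t + 1) ω = z} = P (h t) z

theorem measure_pathSet_succ_le [IsFiniteMeasure μ] {P : S → S → ℝ≥0∞}
    (hP : HasTransitions μ X P) (t : ℕ) (h : ℕ → S) :
    μ (pathSet X (t + 1) h) ≤ μ (pathSet X t h) * P (h t) (h (t + 1)) := by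
  rw [pathSet_succ]
  by_cases h0 : μ (pathSet X t h) = 0
  · rw [h0, zero_mul]
    exact (measure_mono_null Set.inter_subset_left h0).le
  · have hcond := hP t h h0 (h (t + 1))
    rw [ProbabilityTheory.cond, Measure.smul_apply, smul_eq_mul] at hcond
    rw [← hcond, ← mul_assoc, ENNReal.mul_inv_cancel h0 (measure_ne_top _ _), one_mul,
      Set.inter_comm]
    exact Measure.le_restrict_apply _ _

variable [Fintype S]

-- The sets `{X t = x}` need not be measurable, so we work with this upper bound on their measure.
noncomputable def pathMass (μ : Measure Ω) (X : ℕ → Ω → S) (t : ℕ) (x : S) : ℝ≥0∞ :=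
  ∑ g : Fin t → S, μ (pathSet X t (extendPath g x))

theorem pathMass_zero (x : S) : pathMass μ X 0 x = μ {ω | X 0 ω = x} := by
  simp [pathMass, pathSet, extendPath]

theorem measure_eq_le_pathMass (t : ℕ) (x : S) : μ {ω | X t ω = x} ≤ pathMass μ X t x := by
  refine (measure_mono fun ω hω => ?_).trans
    (measure_biUnion_finset_le Finset.univ fun g : Fin t → S => pathSet X t (extendPath g x))
  simp only [Set.mem_iUnion, Finset.mem_univ, exists_true_left]
  refine ⟨fun u => X u ω, fun u hu => ?_⟩
  rcases hu.lt_or_eq with hu | rfl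
  · simp [extendPath, hu]
  · simpa [extendPath] using hω

theorem pathMass_succ_le [IsFiniteMeasure μ] {P : S → S → ℝ≥0∞} (hP : HasTransitions μ X P)
    (t : ℕ) (z : S) : pathMass μ X (t + 1) z ≤ ∑ x, pathMass μ X t x * P x z := by
  have hstep (g : Fin (t + 1) → S) : μ (pathSet X (t + 1) (extendPath g z)) ≤
      μ (pathSet X t (extendPath (Fin.init g) (g (Fin.last t)))) * P (g (Fin.last t)) z := by
    have hpath : pathSet X t (extendPath g z) =
        pathSet X t (extendPath (Fin.init g) (g (Fin.last t))) := by
      refine pathSet_congr fun u hu => ?_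
      rcases hu.lt_or_eq with hu | rfl
      · simp [extendPath, hu, Nat.lt_succ_of_lt hu, Fin.init]
      · simp [extendPath, Fin.last]
    simpa [hpath, extendPath, Fin.last] using measure_pathSet_succ_le hP t (extendPath g z)
  calc pathMass μ X (t + 1) z
      ≤ ∑ g : Fin (t + 1) → S, μ (pathSet X t (extendPath (Fin.init g) (g (Fin.last t)))) *
          P (g (Fin.last t)) z := Finset.sum_le_sum fun g _ => hstep g
    _ = ∑ q : S × (Fin t → S), μ (pathSet X t (extendPath q.2 q.1)) * P q.1 z :=
        (Fintype.sum_equiv (Fin.snocEquiv fun _ => S).symm _ _ fun _ => rfl)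
    _ = ∑ x, pathMass μ X t x * P x z := by
        simp only [Fintype.sum_prod_type, pathMass, Finset.sum_mul]

theorem sum_mul_pathMass_le [IsFiniteMeasure μ] {P : S → S → ℝ≥0∞} (hP : HasTransitions μ X P)
    (V : S → ℝ≥0∞) {β : ℝ≥0∞} (hV : ∀ x, ∑ z, V z * P x z ≤ β * V x) (t : ℕ) :
    ∑ x, V x * pathMass μ X t x ≤ β ^ t * ∑ x, V x * μ {ω | X 0 ω = x} := by
  induction t with
  | zero => simp [pathMass_zero]
  | succ t ih =>
    calc ∑ z, V z * pathMass μ X (t + 1) z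
        ≤ ∑ z, V z * ∑ x, pathMass μ X t x * P x z :=
          Finset.sum_le_sum fun z _ => mul_le_mul_right (pathMass_succ_le hP t z) _
      _ = ∑ x, pathMass μ X t x * ∑ z, V z * P x z := by
          simp only [Finset.mul_sum]
          rw [Finset.sum_comm]
          exact Finset.sum_congr rfl fun _ _ => Finset.sum_congr rfl fun _ _ => by ring
      _ ≤ ∑ x, pathMass μ X t x * (β * V x) :=
          Finset.sum_le_sum fun x _ => mul_le_mul_right (hV x) _
      _ = β * ∑ x, V x * pathMass μ X t x := by
          rw [Finset.mul_sum]
          exact Finset.sum_congr rfl fun _ _ => by ring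
      _ ≤ β ^ (t + 1) * ∑ x, V x * μ {ω | X 0 ω = x} := by
          rw [pow_succ', mul_assoc]
          exact mul_le_mul_right ih _

theorem measure_ne_le_of_drift [IsFiniteMeasure μ] {P : S → S → ℝ≥0∞}
    (hP : HasTransitions μ X P) (V : S → ℝ≥0∞) {β : ℝ≥0∞} (hV : ∀ x, ∑ z, V z * P x z ≤ β * V x)
    {x₀ : S} (hV₀ : ∀ x ≠ x₀, 1 ≤ V x) (t : ℕ) :
    μ {ω | X t ω ≠ x₀} ≤ β ^ t * ∑ x, V x * μ {ω | X 0 ω = x} := by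
  refine le_trans ?_ (sum_mul_pathMass_le hP V hV t)
  calc μ {ω | X t ω ≠ x₀}
      ≤ ∑ x ∈ Finset.univ.erase x₀, μ {ω | X t ω = x} := by
        refine (measure_mono fun ω hω => ?_).trans (measure_biUnion_finset_le _ _)
        simpa using hω
    _ ≤ ∑ x ∈ Finset.univ.erase x₀, V x * pathMass μ X t x :=
        Finset.sum_le_sum fun x hx => (measure_eq_le_pathMass t x).trans
          (le_mul_of_one_le_left' (hV₀ x (Finset.ne_of_mem_erase hx)))
    _ ≤ ∑ x, V x * pathMass μ X t x :=
        Finset.sum_le_sum_of_subset (Finset.erase_subset _ _)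

end MarkovDrift

theorem StrictMonoBool.strictMono {n : ℕ} {f : (Fin n → Bool) → ℝ} (hf : StrictMonoBool f) :
    StrictMono f :=
  fun _ _ hab => hf _ _ hab.ne' hab.le

namespace OnePlusLambdaEA

open Finset Function

section Bitstrings

variable {n : ℕ}

def numZeros (x : Fin n → Bool) : ℕ := #{i | x i = false}

def numFlipsUp (x y : Fin n → Bool) : ℕ := #{i | x i < y i}

def numFlipsDown (x y : Fin n → Bool) : ℕ := #{i | y i < x i}

theorem numZeros_add_numFlipsUp (x y : Fin n → Bool) :
    numZeros y + numFlipsUp x y = numZeros x + numFlipsDown x y := by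
  simp only [numZeros, numFlipsUp, numFlipsDown, card_filter, ← sum_add_distrib]
  refine sum_congr rfl fun i _ => ?_
  cases x i <;> cases y i <;> rfl

theorem le_of_numFlipsUp_eq_zero {x y : Fin n → Bool} (h : numFlipsUp x y = 0) : y ≤ x :=
  fun i => not_lt.1 <| filter_eq_empty_iff.1 (card_eq_zero.1 h) (mem_univ i)

theorem numFlipsUp_update_true {x : Fin n → Bool} {i : Fin n} (hxi : x i = true)
    (y : Fin n → Bool) : numFlipsUp x (update y i true) = numFlipsUp x y := by
  refine congrArg card (filter_congr fun k _ => ?_)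
  rcases eq_or_ne k i with rfl | hk
  · simp [hxi]
  · rw [update_of_ne hk]

theorem numFlipsDown_eq_sum (x y : Fin n → Bool) :
    (numFlipsDown x y : ℝ) = ∑ i with x i = true, if y i = false then 1 else 0 := by
  rw [numFlipsDown, card_filter, sum_filter]
  push_cast
  refine sum_congr rfl fun i _ => ?_
  cases x i <;> cases y i <;> simp

theorem one_le_numZeros {x : Fin n → Bool} (hx : x ≠ fun _ => true) : 1 ≤ numZeros x := by
  obtain ⟨i, hi⟩ : ∃ i, x i ≠ true := not_forall.1 fun h => hx (funext h)
  exact card_pos.2 ⟨i, by simpa using hi⟩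

theorem numZeros_le (x : Fin n → Bool) : numZeros x ≤ n :=
  (card_filter_le _ _).trans (card_fin n).le

end Bitstrings

section Mutation

variable {n lam : ℕ} {p : ℝ}

noncomputable def mutProb (p : ℝ) (x y : Fin n → Bool) : ℝ :=
  ∏ i, if y i = x i then 1 - p else p

noncomputable def offspringProb (p : ℝ) (x : Fin n → Bool) (ys : Fin lam → Fin n → Bool) : ℝ :=
  ∏ j, mutProb p x (ys j)

theorem mutProb_nonneg (hp0 : 0 ≤ p) (hp1 : p ≤ 1) (x y : Fin n → Bool) : 0 ≤ mutProb p x y :=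
  prod_nonneg fun i _ => by split_ifs <;> linarith

theorem offspringProb_nonneg (hp0 : 0 ≤ p) (hp1 : p ≤ 1) (x : Fin n → Bool)
    (ys : Fin lam → Fin n → Bool) : 0 ≤ offspringProb p x ys :=
  prod_nonneg fun j _ => mutProb_nonneg hp0 hp1 x (ys j)

theorem sum_mutProb (p : ℝ) (x : Fin n → Bool) : ∑ y, mutProb p x y = 1 :=
  sum_prod_eq_one (fun i b => if b = x i then 1 - p else p) fun i => by cases x i <;> simp

theorem sum_offspringProb_mul_apply (p : ℝ) (x : Fin n → Bool) (j : Fin lam)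
    (φ : (Fin n → Bool) → ℝ) :
    ∑ ys, offspringProb p x ys * φ (ys j) = ∑ y, mutProb p x y * φ y :=
  sum_prod_mul_apply _ (fun _ => sum_mutProb p x) j φ

theorem sum_offspringProb (p : ℝ) (x : Fin n → Bool) :
    ∑ ys : Fin lam → Fin n → Bool, offspringProb p x ys = 1 :=
  sum_prod_eq_one _ fun _ => sum_mutProb p x

theorem mutProb_self (p : ℝ) (x : Fin n → Bool) : mutProb p x x = (1 - p) ^ n := by
  simp [mutProb]

theorem mutProb_update_mul (p : ℝ) (x y : Fin n → Bool) (i : Fin n) (b : Bool) :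
    mutProb p x (update y i b) * (if y i = x i then 1 - p else p) =
      mutProb p x y * (if b = x i then 1 - p else p) := by
  have hb := prod_apply_update (fun i b => if b = x i then 1 - p else p) y i b
  have hy := prod_apply_update (fun i b => if b = x i then 1 - p else p) y i (y i)
  rw [update_eq_self] at hy
  simp only [mutProb, hb, hy]
  ring

def flipBit (j : Fin lam) (i : Fin n) : Equiv.Perm (Fin lam → Fin n → Bool) :=
  Involutive.toPerm (fun ys => update ys j (update (ys j) i !ys j i)) fun ys => by
    ext k l
    rcases eq_or_ne k j with rfl | hk
    · rcases eq_or_ne l i with rfl | hl <;> simp [*]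
    · simp [hk]

theorem flipBit_apply_of_false {ys : Fin lam → Fin n → Bool} {j : Fin lam} {i : Fin n}
    (h : ys j i = false) : flipBit j i ys = update ys j (update (ys j) i true) := by
  change update ys j (update (ys j) i !ys j i) = _
  rw [h, Bool.not_false]

theorem offspringProb_flipBit {x : Fin n → Bool} {ys : Fin lam → Fin n → Bool} {j : Fin lam}
    {i : Fin n} (hxi : x i = true) (hyi : ys j i = false) :
    offspringProb p x ys * (1 - p) = offspringProb p x (flipBit j i ys) * p := by
  have hflip := prod_apply_update (fun _ y => mutProb p x y) ys j (update (ys j) i true)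
  have hys := prod_apply_update (fun _ y => mutProb p x y) ys j (ys j)
  rw [update_eq_self] at hys
  have hbit := mutProb_update_mul p x (ys j) i true
  simp only [hxi, hyi, if_true, Bool.false_eq_true, if_false] at hbit
  simp only [offspringProb, flipBit_apply_of_false hyi, hflip, hys]
  linear_combination (-(∏ k ∈ {j}ᶜ, mutProb p x (ys k))) * hbit

end Mutation

section Selection

variable {ι α : Type*} [Fintype ι] (f : α → ℝ) (ys : ι → α)

noncomputable def fittest : Finset ι := {j | ∀ k, f (ys k) ≤ f (ys j)}

noncomputable def selWeight (j : ι) : ℝ :=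
  if j ∈ fittest f ys then (#(fittest f ys) : ℝ)⁻¹ else 0

theorem mem_fittest {j : ι} : j ∈ fittest f ys ↔ ∀ k, f (ys k) ≤ f (ys j) := by
  simp [fittest]

theorem fittest_nonempty [Nonempty ι] : (fittest f ys).Nonempty := by
  obtain ⟨j, -, hj⟩ := exists_max_image univ (fun j => f (ys j)) univ_nonempty
  exact ⟨j, (mem_fittest f ys).2 fun k => hj k (mem_univ k)⟩

theorem selWeight_nonneg (j : ι) : 0 ≤ selWeight f ys j := by
  unfold selWeight
  split_ifs <;> positivity

theorem selWeight_le_one (j : ι) : selWeight f ys j ≤ 1 := by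
  unfold selWeight
  split_ifs with hj
  · exact inv_le_one_of_one_le₀ (by exact_mod_cast card_pos.2 ⟨j, hj⟩)
  · exact zero_le_one

theorem sum_selWeight_mul_ite (Q : ι → Prop) [DecidablePred Q] :
    ∑ j, selWeight f ys j * (if Q j then 1 else 0) =
      (#{j ∈ fittest f ys | Q j} : ℝ) / #(fittest f ys) := by
  simp only [selWeight, mul_ite, mul_one, mul_zero, ← ite_and]
  rw [sum_ite, sum_const_zero, add_zero, sum_const, nsmul_eq_mul, div_eq_mul_inv]
  congr 3
  ext j
  simp [and_comm]

theorem sum_selWeight [Nonempty ι] : ∑ j, selWeight f ys j = 1 := by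
  simpa [div_self, (fittest_nonempty f ys).card_pos.ne'] using
    sum_selWeight_mul_ite f ys fun _ => True

variable [DecidableEq ι] {f ys}

theorem fittest_update_of_lt {j : ι} {a : α} (hj : j ∈ fittest f ys) (ha : f (ys j) < f a) :
    fittest f (update ys j a) = {j} := by
  rw [mem_fittest] at hj
  ext k
  rw [mem_fittest, mem_singleton]
  constructor
  · intro hk
    by_contra hkj
    have := hk j
    rw [update_self, update_of_ne hkj] at this
    linarith [hj k]
  · rintro rfl l
    rcases eq_or_ne l k with rfl | hl
    · exact le_rfl
    · rw [update_self, update_of_ne hl]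
      linarith [hj l]

theorem selWeight_update_of_lt {j : ι} {a : α} (hj : j ∈ fittest f ys) (ha : f (ys j) < f a) :
    selWeight f (update ys j a) j = 1 := by
  simp [selWeight, fittest_update_of_lt hj ha]

end Selection

section Step

variable {n lam : ℕ} {p : ℝ} {f : (Fin n → Bool) → ℝ}

noncomputable def select (f : (Fin n → Bool) → ℝ) (x y : Fin n → Bool) : Fin n → Bool :=
  if f x ≤ f y then y else x

noncomputable def stepR (lam : ℕ) (p : ℝ) (f : (Fin n → Bool) → ℝ) (x z : Fin n → Bool) : ℝ :=
  ∑ ys : Fin lam → Fin n → Bool,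
    offspringProb p x ys * ∑ j, selWeight f ys j * if select f x (ys j) = z then 1 else 0

theorem stepR_nonneg (hp0 : 0 ≤ p) (hp1 : p ≤ 1) (x z : Fin n → Bool) :
    0 ≤ stepR lam p f x z :=
  sum_nonneg fun ys _ => mul_nonneg (offspringProb_nonneg hp0 hp1 x ys) <|
    sum_nonneg fun j _ => mul_nonneg (selWeight_nonneg f ys j) (by split_ifs <;> norm_num)

theorem stepP_eq_ofReal {c : ℝ} (hlam : 0 < lam) (hp0 : 0 ≤ c / n) (hp1 : c / n ≤ 1)
    (x z : Fin n → Bool) : stepP n lam c f x z = ENNReal.ofReal (stepR lam (c / n) f x z) := by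
  have : Nonempty (Fin lam) := ⟨⟨0, hlam⟩⟩
  rw [stepR, ENNReal.ofReal_sum_of_nonneg fun ys _ => mul_nonneg
    (offspringProb_nonneg hp0 hp1 x ys) (by rw [sum_selWeight_mul_ite f ys]; positivity)]
  refine sum_congr rfl fun ys _ => ?_
  rw [ENNReal.ofReal_mul (offspringProb_nonneg hp0 hp1 x ys), offspringProb,
    ENNReal.ofReal_prod_of_nonneg fun j _ => mutProb_nonneg hp0 hp1 x (ys j),
    sum_selWeight_mul_ite f ys,
    ENNReal.ofReal_div_of_pos (by exact_mod_cast (fittest_nonempty f ys).card_pos),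
    ENNReal.ofReal_natCast, ENNReal.ofReal_natCast, fittest, filter_filter]
  unfold select
  congr

theorem sum_mul_stepR (V : (Fin n → Bool) → ℝ) (x : Fin n → Bool) :
    ∑ z, V z * stepR lam p f x z =
      ∑ ys : Fin lam → Fin n → Bool,
        offspringProb p x ys * ∑ j, selWeight f ys j * V (select f x (ys j)) := by
  simp only [stepR, mul_sum]
  rw [sum_comm]
  refine sum_congr rfl fun ys _ => ?_
  rw [sum_comm]
  refine sum_congr rfl fun j _ => ?_
  simp only [mul_ite, mul_one, mul_zero, sum_ite_eq, mem_univ, if_true]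
  ring

end Step

section Drift

variable {n lam : ℕ} {p : ℝ} {f : (Fin n → Bool) → ℝ} {x : Fin n → Bool}

noncomputable def progressWeight (f : (Fin n → Bool) → ℝ) (x : Fin n → Bool)
    (ys : Fin lam → Fin n → Bool) (j : Fin lam) : ℝ :=
  if f x ≤ f (ys j) ∧ 0 < numFlipsUp x (ys j) then selWeight f ys j else 0

theorem progressWeight_nonneg (ys : Fin lam → Fin n → Bool) (j : Fin lam) :
    0 ≤ progressWeight f x ys j := by
  unfold progressWeight
  split_ifs
  exacts [selWeight_nonneg f ys j, le_rfl]

theorem progressWeight_le_mul_numFlipsUp (ys : Fin lam → Fin n → Bool) (j : Fin lam) :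
    progressWeight f x ys j ≤ progressWeight f x ys j * numFlipsUp x (ys j) := by
  unfold progressWeight
  split_ifs with h
  · exact le_mul_of_one_le_right (selWeight_nonneg f ys j) (by exact_mod_cast h.2)
  · simp

theorem numZeros_select (hf : StrictMono f) (x y : Fin n → Bool) :
    (numZeros (select f x y) : ℝ) = numZeros x +
      if f x ≤ f y ∧ 0 < numFlipsUp x y then (numFlipsDown x y : ℝ) - numFlipsUp x y else 0 := by
  have hcount : (numZeros y : ℝ) + numFlipsUp x y = numZeros x + numFlipsDown x y := by
    exact_mod_cast numZeros_add_numFlipsUp x y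
  unfold select
  split_ifs with hacc hprog hprog
  · linarith
  · have hS : numFlipsUp x y = 0 := Nat.eq_zero_of_le_zero (not_lt.1 fun h => hprog ⟨hacc, h⟩)
    have hyx : y = x := (le_of_numFlipsUp_eq_zero hS).eq_of_not_lt
      fun hlt => (hf hlt).not_ge hacc
    simp [hyx]
  · exact absurd hprog.1 hacc
  · simp

theorem sum_numZeros_mul_stepR (hf : StrictMono f) (hlam : 0 < lam) (x : Fin n → Bool) :
    ∑ z, (numZeros z : ℝ) * stepR lam p f x z = numZeros x +
      ∑ ys : Fin lam → Fin n → Bool, offspringProb p x ys *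
        ∑ j, progressWeight f x ys j * ((numFlipsDown x (ys j) : ℝ) - numFlipsUp x (ys j)) := by
  have : Nonempty (Fin lam) := ⟨⟨0, hlam⟩⟩
  have hsplit (ys : Fin lam → Fin n → Bool) (j : Fin lam) :
      selWeight f ys j * numZeros (select f x (ys j)) = selWeight f ys j * numZeros x +
        progressWeight f x ys j * ((numFlipsDown x (ys j) : ℝ) - numFlipsUp x (ys j)) := by
    rw [numZeros_select hf, progressWeight]
    split_ifs <;> ring
  simp only [sum_mul_stepR, hsplit, sum_add_distrib, ← sum_mul, sum_selWeight, one_mul, mul_add,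
    sum_offspringProb]

theorem progressWeight_le_flipBit (hf : StrictMono f) {ys : Fin lam → Fin n → Bool}
    {j : Fin lam} {i : Fin n} (hxi : x i = true) (hyi : ys j i = false) :
    progressWeight f x ys j ≤ progressWeight f x (flipBit j i ys) j := by
  by_cases hprog : j ∈ fittest f ys ∧ f x ≤ f (ys j) ∧ 0 < numFlipsUp x (ys j)
  · obtain ⟨hfit, hacc, hup⟩ := hprog
    have hlt : f (ys j) < f (update (ys j) i true) := hf (lt_update_self_iff.2 (by simp [hyi]))
    rw [progressWeight, if_pos ⟨hacc, hup⟩, flipBit_apply_of_false hyi, progressWeight,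
      update_self, numFlipsUp_update_true hxi, if_pos ⟨hacc.trans hlt.le, hup⟩,
      selWeight_update_of_lt hfit hlt]
    exact selWeight_le_one f ys j
  · have hzero : progressWeight f x ys j = 0 := by
      unfold progressWeight selWeight
      split_ifs <;> tauto
    exact hzero ▸ progressWeight_nonneg _ j

theorem sum_progressWeight_of_lt (hf : StrictMono f) {ys : Fin lam → Fin n → Bool} {j₀ : Fin lam}
    (h : x < ys j₀) : ∑ j, progressWeight f x ys j = 1 := by
  have : Nonempty (Fin lam) := ⟨j₀⟩
  rw [← sum_selWeight f ys]
  refine sum_congr rfl fun j _ => ?_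
  by_cases hfit : j ∈ fittest f ys
  · have hgt : f x < f (ys j) :=
      (hf h).trans_le ((mem_fittest f ys).1 hfit j₀)
    have hup : 0 < numFlipsUp x (ys j) :=
      Nat.pos_of_ne_zero fun h0 => (hf.monotone (le_of_numFlipsUp_eq_zero h0)).not_gt hgt
    rw [progressWeight, if_pos ⟨hgt.le, hup⟩]
  · simp [progressWeight, selWeight, hfit]

/-- Setting bit `i` of offspring `j` back to one multiplies its probability by `(1 - p) / p` and
can only increase its progress weight, so each one of `x` is lost with probability at most `p`
under the weight `progressWeight`. -/
theorem sum_progressWeight_mul_numFlipsDown_le (hf : StrictMono f) (hp0 : 0 ≤ p) (hp1 : p ≤ 1)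
    (x : Fin n → Bool) (j : Fin lam) :
    ∑ ys, offspringProb p x ys * progressWeight f x ys j * numFlipsDown x (ys j) ≤
      n * p * ∑ ys, offspringProb p x ys * progressWeight f x ys j := by
  set E := ∑ ys, offspringProb p x ys * progressWeight f x ys j
  have hE : 0 ≤ E := sum_nonneg fun ys _ =>
    mul_nonneg (offspringProb_nonneg hp0 hp1 x ys) (progressWeight_nonneg ys j)
  have hbit (i : Fin n) (hxi : x i = true) :
      ∑ ys with ys j i = false, offspringProb p x ys * progressWeight f x ys j ≤ p * E := by
    refine sum_filter_le_mul_sum_of_equiv _ _ (flipBit j i) (fun ys => ?_) fun ys hyi => ?_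
    · change (update ys j (update (ys j) i !ys j i)) j i = false ↔ _
      simp
    · rw [mul_right_comm, offspringProb_flipBit hxi hyi, mul_right_comm]
      exact mul_le_mul_of_nonneg_right (mul_le_mul_of_nonneg_left
        (progressWeight_le_flipBit hf hxi hyi) (offspringProb_nonneg hp0 hp1 x _)) hp0
  calc ∑ ys, offspringProb p x ys * progressWeight f x ys j * numFlipsDown x (ys j)
      = ∑ i with x i = true, ∑ ys with ys j i = false,
          offspringProb p x ys * progressWeight f x ys j := by
        simp only [numFlipsDown_eq_sum, mul_sum, mul_ite, mul_one, mul_zero]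
        rw [sum_comm]
        exact sum_congr rfl fun i _ => (sum_filter _ _).symm
    _ ≤ ∑ i with x i = true, p * E := sum_le_sum fun i hi => hbit i (mem_filter.1 hi).2
    _ ≤ n * p * E := by
        rw [sum_const, nsmul_eq_mul, mul_assoc]
        have : (#{i | x i = true} : ℝ) ≤ n := by
          exact_mod_cast (card_filter_le _ _).trans (card_fin n).le
        exact mul_le_mul_of_nonneg_right this (mul_nonneg hp0 hE)

theorem mul_numZeros_le_sum_progressWeight (hf : StrictMono f) (hlam : 0 < lam) (hp0 : 0 ≤ p)
    (hp1 : p ≤ 1) (x : Fin n → Bool) :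
    p * (1 - p) ^ n * numZeros x ≤
      ∑ ys : Fin lam → Fin n → Bool, offspringProb p x ys * ∑ j, progressWeight f x ys j := by
  have hflip (i : Fin n) (hi : x i = false) : p * (1 - p) ^ n ≤ mutProb p x (update x i true) := by
    have h := mutProb_update_mul p x x i true
    simp only [hi, if_true, Bool.true_eq_false, if_false, mutProb_self] at h
    nlinarith [mutProb_nonneg hp0 hp1 x (update x i true)]
  have hinj : Set.InjOn (fun i => update x i true) {i | x i = false} := by
    intro i hi i' _ h
    by_contra hne
    simpa [update_of_ne hne, show x i = false from hi] using congrFun h i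
  calc p * (1 - p) ^ n * numZeros x = ∑ i with x i = false, p * (1 - p) ^ n := by
        rw [sum_const, nsmul_eq_mul, numZeros, mul_comm]
    _ ≤ ∑ i with x i = false, mutProb p x (update x i true) :=
        sum_le_sum fun i hi => hflip i (mem_filter.1 hi).2
    _ = ∑ y ∈ image (fun i => update x i true) {i | x i = false}, mutProb p x y :=
        (sum_image fun i hi i' hi' => hinj (by simpa using hi) (by simpa using hi')).symm
    _ ≤ ∑ y with x < y, mutProb p x y := by
        refine sum_le_sum_of_subset_of_nonneg (fun y hy => ?_) fun y _ _ => ?_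
        · obtain ⟨i, hi, rfl⟩ := mem_image.1 hy
          refine mem_filter.2 ⟨mem_univ _, lt_update_self_iff.2 ?_⟩
          simp [(mem_filter.1 hi).2]
        · exact mutProb_nonneg hp0 hp1 x y
    _ = ∑ ys : Fin lam → Fin n → Bool,
          offspringProb p x ys * if x < ys ⟨0, hlam⟩ then 1 else 0 := by
        rw [sum_offspringProb_mul_apply p x ⟨0, hlam⟩ fun y => if x < y then 1 else 0]
        simp [sum_filter, mul_ite]
    _ ≤ ∑ ys : Fin lam → Fin n → Bool, offspringProb p x ys * ∑ j, progressWeight f x ys j := by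
        refine sum_le_sum fun ys _ =>
          mul_le_mul_of_nonneg_left ?_ (offspringProb_nonneg hp0 hp1 x ys)
        split_ifs with h
        · exact (sum_progressWeight_of_lt hf h).ge
        · exact sum_nonneg fun j _ => progressWeight_nonneg ys j

theorem sum_numZeros_mul_stepR_le (hf : StrictMono f) (hlam : 0 < lam) {δ : ℝ} (hp0 : 0 ≤ p)
    (hp1 : p ≤ 1) (hδ : 0 ≤ δ) (hnp : n * p ≤ 1 - δ) (x : Fin n → Bool) :
    ∑ z, (numZeros z : ℝ) * stepR lam p f x z ≤ (1 - δ ^ 2 * p) * numZeros x := by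
  set E : Fin lam → ℝ := fun j => ∑ ys, offspringProb p x ys * progressWeight f x ys j
  have hjump (j : Fin lam) : ∑ ys, offspringProb p x ys *
      (progressWeight f x ys j * ((numFlipsDown x (ys j) : ℝ) - numFlipsUp x (ys j))) ≤
        -δ * E j := by
    have hdown := sum_progressWeight_mul_numFlipsDown_le hf hp0 hp1 x j
    have hup : E j ≤ ∑ ys, offspringProb p x ys * progressWeight f x ys j * numFlipsUp x (ys j) :=
      sum_le_sum fun ys _ => by
        rw [mul_assoc]
        exact mul_le_mul_of_nonneg_left (progressWeight_le_mul_numFlipsUp ys j)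
          (offspringProb_nonneg hp0 hp1 x ys)
    have hE : 0 ≤ E j := sum_nonneg fun ys _ =>
      mul_nonneg (offspringProb_nonneg hp0 hp1 x ys) (progressWeight_nonneg ys j)
    simp only [mul_sub, ← mul_assoc, sum_sub_distrib]
    linarith [mul_le_mul_of_nonneg_right hnp hE]
  have hgain : δ * p * numZeros x ≤ ∑ j, E j := by
    have hbern : δ ≤ (1 - p) ^ n := by
      have := one_add_mul_le_pow (show -2 ≤ -p by linarith) n
      rw [← sub_eq_add_neg] at this
      linarith
    calc δ * p * numZeros x ≤ p * (1 - p) ^ n * numZeros x := by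
          rw [mul_comm δ]
          exact mul_le_mul_of_nonneg_right (mul_le_mul_of_nonneg_left hbern hp0) (Nat.cast_nonneg _)
      _ ≤ ∑ ys : Fin lam → Fin n → Bool, offspringProb p x ys * ∑ j, progressWeight f x ys j :=
          mul_numZeros_le_sum_progressWeight hf hlam hp0 hp1 x
      _ = ∑ j, E j := by simp only [E, mul_sum]; exact sum_comm
  have hloss : ∑ ys : Fin lam → Fin n → Bool, offspringProb p x ys * ∑ j, progressWeight f x ys j *
      ((numFlipsDown x (ys j) : ℝ) - numFlipsUp x (ys j)) ≤ -δ * ∑ j, E j := by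
    simp only [mul_sum]
    rw [sum_comm]
    exact sum_le_sum fun j _ => hjump j
  rw [sum_numZeros_mul_stepR hf hlam]
  linarith [mul_le_mul_of_nonneg_left hgain hδ]

theorem sum_numZeros_mul_stepP_le (hf : StrictMono f) (hlam : 0 < lam) {c δ : ℝ} (hn : 0 < n)
    (hc : 0 < c) (hδ : 0 ≤ δ) (hc' : c ≤ 1 - δ) (x : Fin n → Bool) :
    ∑ z, (numZeros z : ℝ≥0∞) * stepP n lam c f x z ≤
      ENNReal.ofReal (1 - δ ^ 2 * c / n) * numZeros x := by
  have hn' : (1 : ℝ) ≤ n := by exact_mod_cast hn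
  have hp0 : 0 ≤ c / n := by positivity
  have hp1 : c / n ≤ 1 := (div_le_self hc.le hn').trans (by linarith)
  have hnp : n * (c / n) ≤ 1 - δ := by rwa [mul_div_cancel₀ _ (by positivity)]
  calc ∑ z, (numZeros z : ℝ≥0∞) * stepP n lam c f x z
      = ENNReal.ofReal (∑ z, (numZeros z : ℝ) * stepR lam (c / n) f x z) := by
        rw [ENNReal.ofReal_sum_of_nonneg fun z _ => mul_nonneg (Nat.cast_nonneg _)
          (stepR_nonneg hp0 hp1 x z)]
        refine sum_congr rfl fun z _ => ?_
        rw [ENNReal.ofReal_mul (Nat.cast_nonneg _), ENNReal.ofReal_natCast,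
          stepP_eq_ofReal hlam hp0 hp1]
    _ ≤ ENNReal.ofReal ((1 - δ ^ 2 * (c / n)) * numZeros x) :=
        ENNReal.ofReal_le_ofReal (sum_numZeros_mul_stepR_le hf hlam hp0 hp1 hδ hnp x)
    _ = ENNReal.ofReal (1 - δ ^ 2 * c / n) * numZeros x := by
        rw [ENNReal.ofReal_mul' (Nat.cast_nonneg _), ENNReal.ofReal_natCast, mul_div_assoc]

end Drift

variable {n lam : ℕ} {f : (Fin n → Bool) → ℝ}

theorem one_sub_inv_le_measure_exists_eq_true {Ω : Type*} [MeasurableSpace Ω] {μ : Measure Ω}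
    [IsProbabilityMeasure μ] {X : ℕ → Ω → Fin n → Bool} (hf : StrictMono f) (hlam : 0 < lam)
    {c δ : ℝ} (hn : 1 ≤ n) (hc : 0 < c) (hδ : 0 < δ) (hc' : c ≤ 1 - δ)
    (hinit : ∀ x, μ {ω | X 0 ω = x} = ((2 : ℝ≥0∞) ^ n)⁻¹)
    (hP : HasTransitions μ X (stepP n lam c f)) :
    1 - (n : ℝ≥0∞)⁻¹ ≤
      μ {ω | ∃ t ≤ ⌈2 / (δ ^ 2 * c) * n * Real.log n⌉₊, X t ω = fun _ => true} := by
  set N := ⌈2 / (δ ^ 2 * c) * n * Real.log n⌉₊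
  have hγ1 : δ ^ 2 * c ≤ 1 := by nlinarith
  have hmiss := measure_ne_le_of_drift hP (fun x => (numZeros x : ℝ≥0∞))
    (sum_numZeros_mul_stepP_le hf hlam hn hc hδ.le hc') (fun x hx => by
      exact_mod_cast one_le_numZeros hx) N
  have hstart : ∑ x, (numZeros x : ℝ≥0∞) * μ {ω | X 0 ω = x} ≤ n := by
    calc ∑ x, (numZeros x : ℝ≥0∞) * μ {ω | X 0 ω = x}
        ≤ ∑ _x : Fin n → Bool, n * ((2 : ℝ≥0∞) ^ n)⁻¹ :=
          sum_le_sum fun x _ => by rw [hinit]; gcongr; exact_mod_cast numZeros_le x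
      _ = n := by
          rw [sum_const, card_univ, Fintype.card_fun, Fintype.card_bool, Fintype.card_fin,
            nsmul_eq_mul, Nat.cast_pow, Nat.cast_ofNat, mul_left_comm,
            ENNReal.mul_inv_cancel (by positivity) (by simp), mul_one]
  have hdecay : ENNReal.ofReal (1 - δ ^ 2 * c / n) ^ N * n ≤ (n : ℝ≥0∞)⁻¹ := by
    have hbase : 0 ≤ 1 - δ ^ 2 * c / n :=
      sub_nonneg.2 ((div_le_self (by positivity) (by exact_mod_cast hn)).trans hγ1)
    rw [← ENNReal.ofReal_natCast, ← ENNReal.ofReal_pow hbase,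
      ← ENNReal.ofReal_mul (pow_nonneg hbase N), ← ENNReal.ofReal_inv_of_pos (by positivity)]
    exact ENNReal.ofReal_le_ofReal (one_sub_div_pow_ceil_mul_le (by positivity) hγ1 hn)
  have hcover := measure_univ_le_add_compl (μ := μ) {ω | X N ω = fun _ => true}
  rw [measure_univ, Set.compl_ofPred] at hcover
  refine tsub_le_iff_right.2 (hcover.trans (add_le_add (measure_mono fun ω hω => ⟨N, le_rfl, hω⟩)
    ((hmiss.trans (mul_le_mul_right hstart _)).trans hdecay)))

end OnePlusLambdaEA

open OnePlusLambdaEA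

/-- **The (1+λ)-EA with mutation parameter `c ≤ 1 − δ` optimises every monotone
function in `O(n log n)` generations whp.**  The search point is initialised
uniformly at random, and the chain transition (given the whole history) is
`stepP`. -/
theorem stmt5
    (δ c : ℝ) (lam : ℕ) (hδ : δ ∈ Set.Ioo (0 : ℝ) 1) (hc : 0 < c)
    (hc' : c ≤ 1 - δ) (hlam : 0 < lam) :
    ∃ C : ℝ, 0 < C ∧
      ∀ (f : ∀ n : ℕ, (Fin n → Bool) → ℝ), (∀ n, StrictMonoBool (f n)) →
      ∀ (Ω : ℕ → Type) [∀ n, MeasurableSpace (Ω n)] (μ : ∀ n, Measure (Ω n)),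
        (∀ n, IsProbabilityMeasure (μ n)) →
      ∀ (X : ∀ n : ℕ, ℕ → Ω n → (Fin n → Bool)),
        (∀ n (x : Fin n → Bool), μ n {ω | X n 0 ω = x} = ((2 : ℝ≥0∞) ^ n)⁻¹) →
        (∀ (n t : ℕ) (h : ℕ → (Fin n → Bool)),
          μ n {ω | ∀ u ≤ t, X n u ω = h u} ≠ 0 →
          ∀ z : Fin n → Bool,
            ((μ n)[|{ω | ∀ u ≤ t, X n u ω = h u}]) {ω | X n (t + 1) ω = z}
              = stepP n lam c (f n) (h t) z) →
        Tendsto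
          (fun n => μ n {ω | ∃ t ≤ ⌈C * (n : ℝ) * Real.log (n : ℝ)⌉₊,
            X n t ω = fun _ => true})
          atTop (𝓝 (1 : ℝ≥0∞)) := by
  refine ⟨2 / (δ ^ 2 * c), by have := hδ.1; positivity, fun f hf Ω _ μ hμ X hinit hstep => ?_⟩
  have hlim : Tendsto (fun n : ℕ => 1 - (n : ℝ≥0∞)⁻¹) atTop (𝓝 1) := by
    simpa using ENNReal.Tendsto.sub tendsto_const_nhds ENNReal.tendsto_inv_nat_nhds_zero
      (Or.inl ENNReal.one_ne_top)
  refine tendsto_of_tendsto_of_tendsto_of_le_of_le' hlim tendsto_const_nhds ?_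
    (Eventually.of_forall fun n => by have := hμ n; exact prob_le_one)
  filter_upwards [eventually_ge_atTop 1] with n hn
  have := hμ n
  exact one_sub_inv_le_measure_exists_eq_true (hf n).strictMono hlam hn hc hδ.1 hc' (hinit n)
    (hstep n)
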